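/- Assume additionally that 0 < λ_i ≤ 1 for all i. For a subset S ⊆ {1,…,n} with |S| = r, let U_S be the n×r matrix whose columns are (u_i)_{i∈S}, let Π_S = C_π U_S U_Sᵀ and Ĉ_S = Π_S C_P Π_Sᵀ + (I_n − Π_S) C_π (I_n − Π_Sᵀ). Then d_F(Ĉ_S, C_P) = Σ_{i∉S} (log λ_i)², and this quantity is minimized over all subsets S of cardinality r by taking S to be a set of indices of r smallest eigenvalues λ_i; i.e., for every S with |S| = r, Σ_{i∉S} (log λ_i)² ≥ Σ_{i∉S*} (log λ_i)² where S* collects the indices of the r smallest values among λ_1,…,λ_n. -/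

import Mathlib

open Matrix

open Polynomial in
/-- Characteristic polynomial is invariant under conjugation by an invertible matrix. -/
lemma forstner_aux_charpoly_conj {n : ℕ} (Q Q' A : Matrix (Fin n) (Fin n) ℝ)
    (h1 : Q * Q' = 1) (h2 : Q' * Q = 1) : (Q * A * Q').charpoly = A.charpoly := by
  have hQQ' : Q.map C * Q'.map C = 1 := by
    rw [← Matrix.map_mul, h1, Matrix.map_one _ (map_zero C) (map_one C)]
  have hm : charmatrix (Q * A * Q') = Q.map C * charmatrix A * Q'.map C := by
    simp only [charmatrix, Matrix.mul_sub, Matrix.sub_mul]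
    congr 1
    · rw [Matrix.mul_assoc, (Matrix.scalar_commute (X : ℝ[X]) (Commute.all X) (Q'.map C)).eq,
        ← Matrix.mul_assoc, hQQ', Matrix.one_mul]
    · simp [RingHom.mapMatrix_apply, ← Matrix.map_mul]
  rw [Matrix.charpoly, hm, det_mul, det_mul, mul_comm, ← mul_assoc, ← det_mul, ← Matrix.map_mul,
    h2, Matrix.map_one _ (map_zero C) (map_one C), det_one, one_mul]
  rfl

open Polynomial in
/-- Characteristic polynomial of a diagonal matrix. -/
lemma forstner_aux_charpoly_diagonal {n : ℕ} (d : Fin n → ℝ) :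
    (Matrix.diagonal d).charpoly = ∏ i, (X - C (d i)) := by
  have : charmatrix (Matrix.diagonal d) = Matrix.diagonal fun i => X - C (d i) := by
    ext i j
    rcases eq_or_ne i j with rfl | h
    · simp [charmatrix_apply_eq]
    · simp [charmatrix_apply_ne _ _ _ h, Matrix.diagonal_apply_ne _ h]
  rw [Matrix.charpoly, this, det_diagonal]

open Polynomial in
/-- If two tuples of reals have the same associated `∏ (X - C aᵢ)`, then the sum of
any function over them agree. -/
lemma forstner_aux_sum_of_prod_eq {n : ℕ} (μ σ : Fin n → ℝ)
    (h : ∏ i, (X - C (μ i)) = ∏ i, (X - C (σ i))) (g : ℝ → ℝ) :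
    ∑ i, g (μ i) = ∑ i, g (σ i) := by
  have h2 : ((Finset.univ.val.map μ).map (fun a => X - C a)).prod
      = ((Finset.univ.val.map σ).map (fun a => X - C a)).prod := by
    rw [Multiset.map_map, Multiset.map_map]
    simpa [Finset.prod_eq_multiset_prod, Function.comp] using h
  have hms : (Finset.univ.val.map μ) = (Finset.univ.val.map σ) := by
    have h1 := congrArg Polynomial.roots h2
    rwa [roots_multiset_prod_X_sub_C, roots_multiset_prod_X_sub_C] at h1
  calc ∑ i, g (μ i) = ((Finset.univ.val.map μ).map g).sum := by
        rw [Multiset.map_map]; rfl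
    _ = ((Finset.univ.val.map σ).map g).sum := by rw [hms]
    _ = ∑ i, g (σ i) := by rw [Multiset.map_map]; rfl

/-- Monotonicity of `(log ·)²` on `(0, 1]`. -/
lemma forstner_aux_log_sq_mono {x y : ℝ} (hx : 0 < x) (hxy : x ≤ y) (hy1 : y ≤ 1) :
    Real.log y ^ 2 ≤ Real.log x ^ 2 := by
  have h1 : Real.log x ≤ Real.log y := Real.log_le_log hx hxy
  have h2 : Real.log y ≤ 0 := Real.log_nonpos (by linarith) hy1
  have := sq_le_sq' (by linarith : -(-Real.log x) ≤ Real.log y)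
    (by linarith : Real.log y ≤ -Real.log x)
  simpa [neg_sq] using this

/-- Combinatorial optimality: the sum over `Sᶜ` of `(log λᵢ)²` is minimized when `S`
collects indices of smallest `λᵢ`. -/
lemma forstner_aux_opt {n : ℕ} (lam : Fin n → ℝ) (hlam : ∀ i, 0 < lam i)
    (hlam1 : ∀ i, lam i ≤ 1) (Sstar S : Finset (Fin n)) (hcard : Sstar.card = S.card)
    (hmin : ∀ i ∈ Sstar, ∀ j ∉ Sstar, lam i ≤ lam j) :
    ∑ i ∈ Sstarᶜ, Real.log (lam i) ^ 2 ≤ ∑ i ∈ Sᶜ, Real.log (lam i) ^ 2 := by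
  classical
  set f : Fin n → ℝ := fun i => Real.log (lam i) ^ 2 with hf
  set A : Finset (Fin n) := Sᶜ.filter (· ∈ Sstar) with hA
  set B : Finset (Fin n) := Sstarᶜ.filter (· ∈ S) with hB
  have hSc : ∑ i ∈ Sᶜ, f i = ∑ i ∈ A, f i + ∑ i ∈ Sᶜ.filter (¬ · ∈ Sstar), f i :=
    (Finset.sum_filter_add_sum_filter_not _ _ _).symm
  have hSsc : ∑ i ∈ Sstarᶜ, f i = ∑ i ∈ B, f i + ∑ i ∈ Sstarᶜ.filter (¬ · ∈ S), f i :=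
    (Finset.sum_filter_add_sum_filter_not _ _ _).symm
  have hcommon : Sᶜ.filter (¬ · ∈ Sstar) = Sstarᶜ.filter (¬ · ∈ S) := by
    ext i; simp [Finset.mem_filter, Finset.mem_compl, and_comm]
  have hcardAB : A.card = B.card := by
    have h1 : A.card + (Sᶜ.filter (¬ · ∈ Sstar)).card = Sᶜ.card :=
      Finset.card_filter_add_card_filter_not _
    have h2 : B.card + (Sstarᶜ.filter (¬ · ∈ S)).card = Sstarᶜ.card :=
      Finset.card_filter_add_card_filter_not _
    have h3 : Sᶜ.card = Sstarᶜ.card := by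
      rw [Finset.card_compl, Finset.card_compl, hcard]
    have h4 : (Sᶜ.filter (¬ · ∈ Sstar)).card = (Sstarᶜ.filter (¬ · ∈ S)).card := by
      rw [hcommon]
    omega
  have hAB : ∑ i ∈ B, f i ≤ ∑ i ∈ A, f i := by
    have hcards : Fintype.card A = Fintype.card B := by
      simp only [Fintype.card_coe]; exact hcardAB
    let e : A ≃ B := Fintype.equivOfCardEq hcards
    calc ∑ i ∈ B, f i = ∑ i : B, f i := (Finset.sum_coe_sort B f).symm
      _ = ∑ a : A, f (e a) := (Equiv.sum_comp e (fun b : B => f b.1)).symm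
      _ ≤ ∑ a : A, f a.1 := by
          refine Finset.sum_le_sum fun a _ => ?_
          have haA : (a : Fin n) ∈ A := a.2
          have heB : ((e a : B) : Fin n) ∈ B := (e a).2
          have ha1 : (a : Fin n) ∈ Sstar := (Finset.mem_filter.mp haA).2
          have he1 : ((e a : B) : Fin n) ∉ Sstar :=
            Finset.mem_compl.mp (Finset.mem_filter.mp heB).1
          exact forstner_aux_log_sq_mono (hlam _) (hmin _ ha1 _ he1) (hlam1 _)
      _ = ∑ i ∈ A, f i := Finset.sum_coe_sort A f
  rw [hSc, hSsc, hcommon]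
  exact add_le_add_left hAB _

/-- The old Mathlib `Matrix.PosSemidef.sqrt` (removed since), with its old definition. -/
noncomputable def posSemidefSqrtOld {n : ℕ} {B : Matrix (Fin n) (Fin n) ℝ} (hA : B.PosSemidef) :
    Matrix (Fin n) (Fin n) ℝ :=
  (hA.1.eigenvectorUnitary : Matrix (Fin n) (Fin n) ℝ) *
    diagonal ((↑) ∘ (√·) ∘ hA.1.eigenvalues) *
    (star hA.1.eigenvectorUnitary : Matrix (Fin n) (Fin n) ℝ)

lemma posSemidefSqrtOld_posSemidef {n : ℕ} {B : Matrix (Fin n) (Fin n) ℝ} (hA : B.PosSemidef) :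
    (posSemidefSqrtOld hA).PosSemidef := by
  unfold posSemidefSqrtOld
  apply PosSemidef.mul_mul_conjTranspose_same
  refine posSemidef_diagonal_iff.mpr fun i => ?_
  simp [Real.sqrt_nonneg]

lemma posSemidefSqrtOld_mul_self {n : ℕ} {B : Matrix (Fin n) (Fin n) ℝ} (hA : B.PosSemidef) :
    posSemidefSqrtOld hA * posSemidefSqrtOld hA = B := by
  have hV := hA.1.eigenvectorUnitary.2
  have hVV' : star (hA.1.eigenvectorUnitary : Matrix (Fin n) (Fin n) ℝ)
      * hA.1.eigenvectorUnitary = 1 := Matrix.mem_unitaryGroup_iff'.mp hV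
  have hD : diagonal ((↑) ∘ (√·) ∘ hA.1.eigenvalues : Fin n → ℝ)
      * diagonal ((↑) ∘ (√·) ∘ hA.1.eigenvalues : Fin n → ℝ)
      = diagonal (RCLike.ofReal ∘ hA.1.eigenvalues) := by
    rw [diagonal_mul_diagonal]; congr 1; funext i
    simp [Real.mul_self_sqrt (hA.eigenvalues_nonneg i)]
  unfold posSemidefSqrtOld
  conv_rhs => rw [hA.1.spectral_theorem, Unitary.conjStarAlgAut_apply]
  rw [show ∀ V D W : Matrix (Fin n) (Fin n) ℝ, V * D * W * (V * D * W) = V * (D * (W * V) * D) * W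
    from fun V D W => by simp only [Matrix.mul_assoc], hVV', Matrix.mul_one, hD]

open Classical in
/-- The Förstner distance `d_F(A,B) = Σ_i (log σ_i)²` where the `σ_i` are the
eigenvalues of `B^{-1/2} A B^{-1/2}` (and `0` in degenerate, unused cases). -/
noncomputable def forstnerDist {n : ℕ} (A B : Matrix (Fin n) (Fin n) ℝ) : ℝ :=
  if hB : B.PosDef then
    if h : ((posSemidefSqrtOld hB.posSemidef)⁻¹ * A * (posSemidefSqrtOld hB.posSemidef)⁻¹).IsHermitian then
      ∑ i, Real.log (h.eigenvalues i) ^ 2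
    else 0
  else 0

/-- Projector associated with a subset `S` of eigendirections:
`Π_S = C_π U_S U_Sᵀ = C_π Σ_{i ∈ S} u_i u_iᵀ`. -/
def subsetProj {n : ℕ} (Cπ U : Matrix (Fin n) (Fin n) ℝ) (S : Finset (Fin n)) :
    Matrix (Fin n) (Fin n) ℝ :=
  Cπ * ∑ i ∈ S, vecMulVec (fun k => U k i) (fun k => U k i)

/-- Approximate posterior covariance associated with a subset `S`:
`Ĉ_S = Π_S C_P Π_Sᵀ + (I − Π_S) C_π (I − Π_Sᵀ)`. -/
def subsetApproxCov {n : ℕ} (Cπ CP U : Matrix (Fin n) (Fin n) ℝ) (S : Finset (Fin n)) :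
    Matrix (Fin n) (Fin n) ℝ :=
  subsetProj Cπ U S * CP * (subsetProj Cπ U S)ᵀ +
    (1 - subsetProj Cπ U S) * Cπ * (1 - (subsetProj Cπ U S)ᵀ)

open Polynomial in
/-- Assuming `0 < λ_i ≤ 1`, for any subset `S` of cardinality `r`,
`d_F(Ĉ_S, C_P) = Σ_{i ∉ S} (log λ_i)²`, and this is minimized by taking `S*` to be a
set of indices of the `r` smallest eigenvalues. -/
theorem forstner_optimal_subset {n r : ℕ} (hr : r ≤ n)
    (Cπ CP : Matrix (Fin n) (Fin n) ℝ) (hCπ : Cπ.PosDef) (hCP : CP.PosDef)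
    (U : Matrix (Fin n) (Fin n) ℝ) (lam : Fin n → ℝ)
    (hlam : ∀ i, 0 < lam i) (hlam1 : ∀ i, lam i ≤ 1)
    (heig : ∀ i, CP *ᵥ (fun k => U k i) = lam i • (Cπ *ᵥ (fun k => U k i)))
    (hnorm : Uᵀ * Cπ * U = 1)
    (Sstar : Finset (Fin n)) (hSstar : Sstar.card = r)
    (hSstarMin : ∀ i ∈ Sstar, ∀ j ∉ Sstar, lam i ≤ lam j) :
    ∀ S : Finset (Fin n), S.card = r →
      forstnerDist (subsetApproxCov Cπ CP U S) CP = ∑ i ∈ Sᶜ, Real.log (lam i) ^ 2 ∧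
      ∑ i ∈ Sᶜ, Real.log (lam i) ^ 2 ≥ ∑ i ∈ Sstarᶜ, Real.log (lam i) ^ 2 := by
  intro S hS
  classical
  constructor
  · -- the distance formula
    have hCπs : Cπᵀ = Cπ := hCπ.1
    have h1 : (Uᵀ * Cπ) * U = 1 := by rw [Matrix.mul_assoc] at hnorm ⊢; exact hnorm
    have hU1 : U * (Uᵀ * Cπ) = 1 := mul_eq_one_comm.mp h1
    have hUUCπ : U * Uᵀ * Cπ = 1 := by rw [Matrix.mul_assoc]; exact hU1
    have hCπUU : Cπ * U * Uᵀ = 1 := by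
      have := congrArg Matrix.transpose hUUCπ
      simpa [Matrix.transpose_mul, hCπs, Matrix.mul_assoc] using this
    have hCPU : CP * U = Cπ * U * Matrix.diagonal lam := by
      ext k i
      rw [Matrix.mul_diagonal]
      have h := congrFun (heig i) k
      simp only [Matrix.mulVec, dotProduct, Pi.smul_apply, smul_eq_mul] at h
      simp only [Matrix.mul_apply]
      rw [h, mul_comm]
    have hLam : Uᵀ * CP * U = Matrix.diagonal lam := by
      calc Uᵀ * CP * U = Uᵀ * Cπ * U * Matrix.diagonal lam := by
            rw [Matrix.mul_assoc, hCPU, ← Matrix.mul_assoc, ← Matrix.mul_assoc]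
        _ = Matrix.diagonal lam := by rw [hnorm, Matrix.one_mul]
    set d : Fin n → ℝ := fun i => if i ∈ S then 1 else 0 with hd
    set m : Fin n → ℝ := fun i => if i ∈ S then lam i else 1 with hm
    have hP : subsetProj Cπ U S = Cπ * U * Matrix.diagonal d * Uᵀ := by
      rw [subsetProj]
      rw [show (∑ i ∈ S, vecMulVec (fun k => U k i) (fun k => U k i))
          = U * Matrix.diagonal d * Uᵀ from ?_]
      · rw [Matrix.mul_assoc, Matrix.mul_assoc, Matrix.mul_assoc]
      · ext k l
        simp only [Matrix.sum_apply, vecMulVec_apply, Matrix.mul_apply, Matrix.diagonal_apply,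
          Matrix.transpose_apply, hd, ite_mul, mul_ite, mul_one, mul_zero, zero_mul, one_mul,
          Finset.sum_ite_eq, Finset.mem_univ, if_true]
        simp [Finset.sum_ite_mem]
    have hPT : (subsetProj Cπ U S)ᵀ = U * Matrix.diagonal d * Uᵀ * Cπ := by
      rw [hP]
      simp [Matrix.transpose_mul, hCπs, Matrix.diagonal_transpose, Matrix.mul_assoc]
    have h1P : 1 - subsetProj Cπ U S = Cπ * U * (1 - Matrix.diagonal d) * Uᵀ := by
      rw [hP]
      simp only [Matrix.mul_sub, Matrix.sub_mul, Matrix.mul_one]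
      rw [hCπUU]
    have h1PT : 1 - (subsetProj Cπ U S)ᵀ = U * (1 - Matrix.diagonal d) * Uᵀ * Cπ := by
      rw [hPT]
      simp only [Matrix.mul_sub, Matrix.sub_mul, Matrix.mul_one, Matrix.one_mul]
      rw [hUUCπ]
    have key : ∀ A B : Matrix (Fin n) (Fin n) ℝ,
        (Cπ * U * A * Uᵀ) * CP * (U * B * Uᵀ * Cπ)
          = Cπ * U * (A * Matrix.diagonal lam * B) * Uᵀ * Cπ := by
      intro A B
      calc (Cπ * U * A * Uᵀ) * CP * (U * B * Uᵀ * Cπ)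
          = Cπ * U * A * (Uᵀ * CP * U) * B * Uᵀ * Cπ := by simp only [Matrix.mul_assoc]
        _ = Cπ * U * (A * Matrix.diagonal lam * B) * Uᵀ * Cπ := by
            rw [hLam]; simp only [Matrix.mul_assoc]
    have key2 : ∀ A B : Matrix (Fin n) (Fin n) ℝ,
        (Cπ * U * A * Uᵀ) * Cπ * (U * B * Uᵀ * Cπ)
          = Cπ * U * (A * B) * Uᵀ * Cπ := by
      intro A B
      calc (Cπ * U * A * Uᵀ) * Cπ * (U * B * Uᵀ * Cπ)
          = Cπ * U * A * (Uᵀ * Cπ * U) * B * Uᵀ * Cπ := by simp only [Matrix.mul_assoc]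
        _ = Cπ * U * (A * B) * Uᵀ * Cπ := by
            rw [hnorm]; simp only [Matrix.mul_one, Matrix.mul_assoc]
    have hChat : subsetApproxCov Cπ CP U S = Cπ * U * Matrix.diagonal m * Uᵀ * Cπ := by
      rw [subsetApproxCov, h1PT, h1P, hPT, hP, key, key2]
      rw [show (Cπ * U * (Matrix.diagonal d * Matrix.diagonal lam * Matrix.diagonal d) * Uᵀ * Cπ
          + Cπ * U * ((1 - Matrix.diagonal d) * (1 - Matrix.diagonal d)) * Uᵀ * Cπ)
          = Cπ * U * (Matrix.diagonal d * Matrix.diagonal lam * Matrix.diagonal d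
              + (1 - Matrix.diagonal d) * (1 - Matrix.diagonal d)) * Uᵀ * Cπ from by
        simp only [Matrix.mul_add, Matrix.add_mul]]
      have hdiag : Matrix.diagonal d * Matrix.diagonal lam * Matrix.diagonal d
          + (1 - Matrix.diagonal d) * (1 - Matrix.diagonal d) = Matrix.diagonal m := by
        rw [show (1 : Matrix (Fin n) (Fin n) ℝ) = Matrix.diagonal (fun _ => (1:ℝ)) from
          (Matrix.diagonal_one).symm]
        simp only [Matrix.diagonal_sub, Matrix.diagonal_mul_diagonal, Matrix.diagonal_add]
        ext i j
        rcases eq_or_ne i j with rfl | hij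
        · by_cases hi : i ∈ S <;> simp [hd, hm, hi]
        · simp [Matrix.diagonal_apply_ne _ hij]
      rw [hdiag]
    -- the square root of CP
    set R := posSemidefSqrtOld hCP.posSemidef with hRdef
    have hRps : R.PosSemidef := posSemidefSqrtOld_posSemidef hCP.posSemidef
    have hRs : Rᵀ = R := hRps.1
    have hRR : R * R = CP := posSemidefSqrtOld_mul_self hCP.posSemidef
    have hRdet : IsUnit R.det := by
      have hdet : R.det * R.det = CP.det := by rw [← Matrix.det_mul, hRR]
      have hCPdet := hCP.det_pos
      refine isUnit_iff_ne_zero.mpr fun h0 => ?_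
      rw [h0, mul_zero] at hdet
      exact absurd hdet.symm (ne_of_gt hCPdet)
    have hRiR : R⁻¹ * R = 1 := Matrix.nonsing_inv_mul R hRdet
    have hRRi : R * R⁻¹ = 1 := Matrix.mul_nonsing_inv R hRdet
    have hRis : (R⁻¹)ᵀ = R⁻¹ := by rw [Matrix.transpose_nonsing_inv, hRs]
    have hCPdetU : IsUnit CP.det := isUnit_iff_ne_zero.mpr (ne_of_gt hCP.det_pos)
    have hCPi : CP⁻¹ = R⁻¹ * R⁻¹ := by rw [← hRR, Matrix.mul_inv_rev]
    have hCPiCP : CP⁻¹ * CP = 1 := Matrix.nonsing_inv_mul CP hCPdetU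
    have hlamne : ∀ i, lam i ≠ 0 := fun i => (hlam i).ne'
    set lamInv : Fin n → ℝ := fun i => (lam i)⁻¹ with hlamInv
    have hLL : Matrix.diagonal lam * Matrix.diagonal lamInv = 1 := by
      rw [Matrix.diagonal_mul_diagonal,
        show (fun i => lam i * lamInv i) = fun _ => (1:ℝ) from
          funext fun i => mul_inv_cancel₀ (hlamne i), Matrix.diagonal_one]
    have hCPiCπU : CP⁻¹ * (Cπ * U) = U * Matrix.diagonal lamInv := by
      have h3 : CP⁻¹ * (Cπ * U * Matrix.diagonal lam) = U := by
        rw [← hCPU, ← Matrix.mul_assoc, hCPiCP, Matrix.one_mul]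
      calc CP⁻¹ * (Cπ * U)
          = CP⁻¹ * (Cπ * U) * (Matrix.diagonal lam * Matrix.diagonal lamInv) := by
            rw [hLL, Matrix.mul_one]
        _ = (CP⁻¹ * (Cπ * U * Matrix.diagonal lam)) * Matrix.diagonal lamInv := by
            simp only [Matrix.mul_assoc]
        _ = U * Matrix.diagonal lamInv := by rw [h3]
    set s : Fin n → ℝ := fun i => Real.sqrt (lam i) with hs
    set Q := R⁻¹ * (Cπ * U) * Matrix.diagonal s with hQdef
    have hQT : Qᵀ = Matrix.diagonal s * (Uᵀ * Cπ) * R⁻¹ := by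
      rw [hQdef]
      simp [Matrix.transpose_mul, Matrix.diagonal_transpose, hCπs, hRis, Matrix.mul_assoc]
    have hQQ : Qᵀ * Q = 1 := by
      have hmid : (Uᵀ * Cπ) * (CP⁻¹ * (Cπ * U)) = Matrix.diagonal lamInv := by
        rw [hCPiCπU, ← Matrix.mul_assoc, h1, Matrix.one_mul]
      calc Qᵀ * Q
          = Matrix.diagonal s * ((Uᵀ * Cπ) * ((R⁻¹ * R⁻¹) * (Cπ * U))) * Matrix.diagonal s := by
            rw [hQT, hQdef]; simp only [Matrix.mul_assoc]
        _ = Matrix.diagonal s * ((Uᵀ * Cπ) * (CP⁻¹ * (Cπ * U))) * Matrix.diagonal s := by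
            rw [hCPi]
        _ = Matrix.diagonal s * Matrix.diagonal lamInv * Matrix.diagonal s := by rw [hmid]
        _ = 1 := by
            simp only [Matrix.diagonal_mul_diagonal]
            rw [show (fun i => s i * lamInv i * s i) = fun _ => (1:ℝ) from funext fun i => ?_,
              Matrix.diagonal_one]
            have hss : s i * s i = lam i := Real.mul_self_sqrt (hlam i).le
            simp only [hlamInv]
            calc s i * (lam i)⁻¹ * s i = s i * s i * (lam i)⁻¹ := by ring
              _ = 1 := by rw [hss]; exact mul_inv_cancel₀ (hlamne i)
    have hQQ' : Q * Qᵀ = 1 := mul_eq_one_comm.mp hQQ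
    set σ : Fin n → ℝ := fun i => if i ∈ S then 1 else (lam i)⁻¹ with hσ
    have hsσs : Matrix.diagonal s * Matrix.diagonal σ * Matrix.diagonal s
        = Matrix.diagonal m := by
      simp only [Matrix.diagonal_mul_diagonal]
      rw [show (fun i => s i * σ i * s i) = m from funext fun i => ?_]
      have hss : s i * s i = lam i := Real.mul_self_sqrt (hlam i).le
      by_cases hi : i ∈ S
      · simp only [hσ, hm, hi, if_true, mul_one]
        exact hss
      · simp only [hσ, hm, hi, if_false]
        calc s i * (lam i)⁻¹ * s i = s i * s i * (lam i)⁻¹ := by ring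
          _ = 1 := by rw [hss]; exact mul_inv_cancel₀ (hlamne i)
    have hW : Q * Matrix.diagonal σ * Qᵀ
        = R⁻¹ * (subsetApproxCov Cπ CP U S) * R⁻¹ := by
      rw [hChat]
      calc Q * Matrix.diagonal σ * Qᵀ
          = R⁻¹ * (Cπ * U) * (Matrix.diagonal s * Matrix.diagonal σ * Matrix.diagonal s)
              * ((Uᵀ * Cπ) * R⁻¹) := by
            rw [hQdef, hQT]; simp only [Matrix.mul_assoc]
        _ = R⁻¹ * (Cπ * U) * Matrix.diagonal m * ((Uᵀ * Cπ) * R⁻¹) := by rw [hsσs]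
        _ = R⁻¹ * (Cπ * U * Matrix.diagonal m * Uᵀ * Cπ) * R⁻¹ := by
            simp only [Matrix.mul_assoc]
    have hWt : (Q * Matrix.diagonal σ * Qᵀ)ᵀ = Q * Matrix.diagonal σ * Qᵀ := by
      simp [Matrix.transpose_mul, Matrix.diagonal_transpose, Matrix.mul_assoc]
    have hHerm : (R⁻¹ * (subsetApproxCov Cπ CP U S) * R⁻¹).IsHermitian := by
      rw [← hW]; exact hWt
    -- characteristic polynomial computations
    have hcp1 : (R⁻¹ * (subsetApproxCov Cπ CP U S) * R⁻¹).charpoly = ∏ i, (X - C (σ i)) := by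
      rw [← hW, forstner_aux_charpoly_conj Q Qᵀ _ hQQ' hQQ, forstner_aux_charpoly_diagonal]
    set V : Matrix (Fin n) (Fin n) ℝ := (hHerm.eigenvectorUnitary : Matrix (Fin n) (Fin n) ℝ)
      with hV
    have hVmem := (hHerm.eigenvectorUnitary).2
    have hVV : V * star V = 1 := Matrix.mem_unitaryGroup_iff.mp hVmem
    have hVV' : star V * V = 1 := Matrix.mem_unitaryGroup_iff'.mp hVmem
    have hcp2 : (R⁻¹ * (subsetApproxCov Cπ CP U S) * R⁻¹).charpoly
        = ∏ i, (X - C (hHerm.eigenvalues i)) := by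
      conv_lhs => rw [hHerm.spectral_theorem, Unitary.conjStarAlgAut_apply]
      rw [show Matrix.diagonal (RCLike.ofReal ∘ hHerm.eigenvalues)
          = Matrix.diagonal hHerm.eigenvalues from by
        simp [RCLike.ofReal_real_eq_id]]
      rw [forstner_aux_charpoly_conj V (star V) _ hVV hVV', forstner_aux_charpoly_diagonal]
    have hsum : ∑ i, Real.log (hHerm.eigenvalues i) ^ 2 = ∑ i, Real.log (σ i) ^ 2 :=
      forstner_aux_sum_of_prod_eq _ _ (hcp2.symm.trans hcp1) (fun x => Real.log x ^ 2)
    -- unfold forstnerDist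
    rw [forstnerDist]
    rw [dif_pos hCP, dif_pos hHerm, hsum]
    -- compute the sum over σ
    have hterm : ∀ i, Real.log (σ i) ^ 2
        = if i ∈ Sᶜ then Real.log (lam i) ^ 2 else 0 := by
      intro i
      by_cases hi : i ∈ S <;> simp [hσ, hi, Real.log_inv, neg_sq]
    rw [Finset.sum_congr rfl fun i _ => hterm i, Finset.sum_ite_mem, Finset.univ_inter]
  · -- optimality
    exact forstner_aux_opt lam hlam hlam1 Sstar S (by rw [hSstar, hS]) hSstarMin
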